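/- Let A and B be p×n real matrices and set X = AAᵀ and Y = BBᵀ. Then the bounded Lipschitz distance between the empirical spectral distributions of X and Y satisfies d_BL²(F^X, F^Y) ≤ (2/p²) Tr(X + Y) · Tr((A − B)(A − B)ᵀ). -/

import Mathlib

open MeasureTheory Filter Finset ProbabilityTheory Topology
open scoped Classical ENNReal NNReal

noncomputable section

/-- Empirical spectral distribution of a real `n × n` matrix `A`; defined as the uniform
probability measure on the eigenvalues when `A` is symmetric (Hermitian), `0` otherwise. -/
noncomputable def ESD {n : ℕ} (A : Matrix (Fin n) (Fin n) ℝ) : Measure ℝ :=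
  if hA : A.IsHermitian then
    ((n : ℝ≥0∞))⁻¹ • ∑ i : Fin n, Measure.dirac (hA.eigenvalues i)
  else 0

/-- Weak convergence of a sequence of measures on `ℝ`, tested against bounded
continuous functions. -/
def WeakLim (μ : ℕ → Measure ℝ) (ν : Measure ℝ) : Prop :=
  ∀ f : BoundedContinuousFunction ℝ ℝ,
    Tendsto (fun n => ∫ x, f x ∂(μ n)) atTop (𝓝 (∫ x, f x ∂ν))

/-- The bounded Lipschitz metric on measures on `ℝ`. -/
noncomputable def dBL (μ ν : Measure ℝ) : ℝ :=
  sSup { r : ℝ | ∃ f : ℝ → ℝ, (∀ x, |f x| ≤ 1) ∧ LipschitzWith 1 f ∧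
    r = |(∫ x, f x ∂μ) - (∫ x, f x ∂ν)| }

/-- The sample autocovariance `γ̂_Y(k) = n⁻¹ ∑_{i=1}^{n-|k|} Y_i Y_{i+|k|}`. -/
noncomputable def sampleACV (Y : ℤ → ℝ) (n : ℕ) (k : ℤ) : ℝ :=
  (n : ℝ)⁻¹ * ∑ i ∈ Finset.Icc (1 : ℤ) ((n : ℤ) - |k|), Y i * Y (i + |k|)

/-- The sample autocovariance matrix `Γ_n(Y) = ((γ̂_Y(i-j)))`. -/
noncomputable def sampleACVM (Y : ℤ → ℝ) (n : ℕ) : Matrix (Fin n) (Fin n) ℝ :=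
  Matrix.of fun i j => sampleACV Y n (((i : ℕ) : ℤ) - ((j : ℕ) : ℤ))

/-- The modified sample autocovariance `γ*_Y(k) = n⁻¹ ∑_{i=1}^{n} Y_i Y_{i+|k|}`. -/
noncomputable def sampleACVstar (Y : ℤ → ℝ) (n : ℕ) (k : ℤ) : ℝ :=
  (n : ℝ)⁻¹ * ∑ i ∈ Finset.Icc (1 : ℤ) (n : ℤ), Y i * Y (i + |k|)

/-- The modified sample autocovariance matrix `Γ*_n(Y) = ((γ*_Y(|i-j|)))`. -/
noncomputable def sampleACVMstar (Y : ℤ → ℝ) (n : ℕ) : Matrix (Fin n) (Fin n) ℝ :=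
  Matrix.of fun i j => sampleACVstar Y n (((i : ℕ) : ℤ) - ((j : ℕ) : ℤ))

/-- The Type I banded sample ACVM: entries with `|i - j| ≥ m` are replaced by `0`. -/
noncomputable def bandACVM (Y : ℤ → ℝ) (n m : ℕ) : Matrix (Fin n) (Fin n) ℝ :=
  Matrix.of fun i j =>
    if |((i : ℕ) : ℤ) - ((j : ℕ) : ℤ)| < (m : ℤ) then
      sampleACV Y n (((i : ℕ) : ℤ) - ((j : ℕ) : ℤ)) else 0

/-- The Type II banded sample ACVM: the `m × m` principal submatrix of `Γ_n(Y)`. -/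
noncomputable def subACVM (Y : ℤ → ℝ) (n m : ℕ) : Matrix (Fin m) (Fin m) ℝ :=
  Matrix.of fun i j => sampleACV Y n (((i : ℕ) : ℤ) - ((j : ℕ) : ℤ))

/-- The tapered sample ACVM `Γ_{n,K}(Y) = ((K((i-j)/m) γ̂_Y(i-j)))`. -/
noncomputable def taperACVM (K : ℝ → ℝ) (Y : ℤ → ℝ) (n m : ℕ) : Matrix (Fin n) (Fin n) ℝ :=
  Matrix.of fun i j =>
    K (((((i : ℕ) : ℤ) - ((j : ℕ) : ℤ) : ℤ) : ℝ) / (m : ℝ)) *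
      sampleACV Y n (((i : ℕ) : ℤ) - ((j : ℕ) : ℤ))

/-- The MA(d) process `X_{t,d} = ∑_{k=0}^{d} θ_k ε_{t-k}`. -/
noncomputable def MAfin {Ω : Type*} (θ : ℕ → ℝ) (d : ℕ) (ε : ℤ → Ω → ℝ) (ω : Ω) (t : ℤ) : ℝ :=
  ∑ k ∈ Finset.range (d + 1), θ k * ε (t - (k : ℤ)) ω

/-- The MA(∞) process `X_t = ∑_{k=0}^{∞} θ_k ε_{t-k}`. -/
noncomputable def MAinf {Ω : Type*} (θ : ℕ → ℝ) (ε : ℤ → Ω → ℝ) (ω : Ω) (t : ℤ) : ℝ :=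
  ∑' k : ℕ, θ k * ε (t - (k : ℤ)) ω

/-- Assumption A(a): `{ε_t}` are i.i.d. with mean `0` and variance `1`. -/
def AssumptionAa {Ω : Type*} [MeasureSpace Ω] (ε : ℤ → Ω → ℝ) : Prop :=
  IsProbabilityMeasure (ℙ : Measure Ω) ∧ (∀ t, Measurable (ε t)) ∧
  iIndepFun ε ℙ ∧
  (∀ t, Measure.map (ε t) ℙ = Measure.map (ε 0) ℙ) ∧
  (∀ t, (∫ ω, ε t ω) = 0) ∧ (∀ t, (∫ ω, (ε t ω) ^ 2) = 1)

/-- Assumption A(b): `{ε_t}` are independent, uniformly bounded, with mean `0` and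
variance `1`. -/
def AssumptionAb {Ω : Type*} [MeasureSpace Ω] (ε : ℤ → Ω → ℝ) : Prop :=
  IsProbabilityMeasure (ℙ : Measure Ω) ∧ (∀ t, Measurable (ε t)) ∧
  iIndepFun ε ℙ ∧
  (∃ C : ℝ, ∀ t ω, |ε t ω| ≤ C) ∧
  (∀ t, (∫ ω, ε t ω) = 0) ∧ (∀ t, (∫ ω, (ε t ω) ^ 2) = 1)

/-- The ACVF of the MA(d) process: `γ_{X^{(d)}}(j) = ∑_{k=0}^{d-j} θ_k θ_{j+k}`. -/
noncomputable def gammaFin (θ : ℕ → ℝ) (d j : ℕ) : ℝ :=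
  if j ≤ d then ∑ k ∈ Finset.range (d - j + 1), θ k * θ (j + k) else 0

/-- The ACVF of the MA(∞) process: `γ_X(j) = ∑_{k=0}^{∞} θ_k θ_{j+k}`. -/
noncomputable def gammaInf (θ : ℕ → ℝ) (j : ℕ) : ℝ :=
  ∑' k : ℕ, θ k * θ (j + k)

/-- The spectral density of the MA(∞) process:
`f_X(t) = ∑_{k=-∞}^{∞} exp(-2πitk) γ_X(|k|) = γ_X(0) + 2 ∑_{k≥1} cos(2πtk) γ_X(k)`. -/
noncomputable def specDensityInf (θ : ℕ → ℝ) (t : ℝ) : ℝ :=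
  gammaInf θ 0 + 2 * ∑' k : ℕ, Real.cos (2 * Real.pi * t * ((k : ℝ) + 1)) * gammaInf θ (k + 1)

/-- The spectral density of the MA(d) process. -/
noncomputable def specDensityFin (θ : ℕ → ℝ) (d : ℕ) (t : ℝ) : ℝ :=
  gammaFin θ d 0 + 2 * ∑ k ∈ Finset.Icc 1 d, Real.cos (2 * Real.pi * t * (k : ℝ)) * gammaFin θ d k

/-- The law of `f(U)` where `U` is uniform on `(0, 1]`. -/
noncomputable def specLaw (f : ℝ → ℝ) : Measure ℝ :=
  Measure.map f (MeasureTheory.volume.restrict (Set.Ioc (0 : ℝ) 1))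

/-- `a` is d-matched: every coordinate is within `d` of some other coordinate. -/
def dMatched (d : ℕ) {h : ℕ} (a : Fin (2 * h) → ℕ) : Prop :=
  ∀ i, ∃ j, j ≠ i ∧ |(a i : ℤ) - (a j : ℤ)| ≤ (d : ℤ)

/-- `a` is minimal d-matched: there is a partition of the index set into pairs
(a fixed-point-free involution) such that `|a_x - a_y| ≤ d` holds exactly on pairs. -/
def minimalMatched (d : ℕ) {h : ℕ} (a : Fin (2 * h) → ℕ) : Prop :=
  ∃ σ : Equiv.Perm (Fin (2 * h)), (∀ x, σ x ≠ x) ∧ (∀ x, σ (σ x) = x) ∧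
    ∀ x y, x ≠ y → (|(a x : ℤ) - (a y : ℤ)| ≤ (d : ℤ) ↔ σ x = y)

/-
Let `λ`, `μ` be the eigenvalues of `AAᵀ`, `BBᵀ`. For a `1`-Lipschitz `f` and any matching `σ` of
the two spectra, `|∫ f dF^X - ∫ f dF^Y| ≤ p⁻¹ ∑ |λᵢ - μ_σ(i)|`. Factoring
`λ - μ = (√λ + √μ)(√λ - √μ)` and using Cauchy–Schwarz, it suffices to find `σ` with
`∑ (√λᵢ - √μ_σ(i))² ≤ Tr((A - B)(A - B)ᵀ)`, i.e. `Tr(ABᵀ) ≤ ∑ √λᵢ √μ_σ(i)` (von Neumann's trace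
inequality). In eigenbases of `AAᵀ` and `BBᵀ` the rows of `A` and `B` become orthogonal with squared
norms `λ` and `μ`; Bessel's inequality and AM-GM then bound `Tr(ABᵀ)` by `∑ √λᵢ √μⱼ Eᵢⱼ` with `E`
substochastic. Such an `E` lies below a doubly stochastic matrix, and by Birkhoff's theorem the
bilinear form is maximised at a permutation matrix.
-/

theorem sq_sum_abs_sq_sub_sq_le {ι : Type*} (s : Finset ι) {a b : ι → ℝ} (ha : ∀ i, 0 ≤ a i)
    (hb : ∀ i, 0 ≤ b i) :
    (∑ i ∈ s, |a i ^ 2 - b i ^ 2|) ^ 2 ≤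
      2 * (∑ i ∈ s, a i ^ 2 + ∑ i ∈ s, b i ^ 2) * ∑ i ∈ s, (a i - b i) ^ 2 := by
  have hfactor : ∀ i, |a i ^ 2 - b i ^ 2| = (a i + b i) * |a i - b i| := fun i ↦ by
    rw [sq_sub_sq, abs_mul, abs_of_nonneg (add_nonneg (ha i) (hb i))]
  calc (∑ i ∈ s, |a i ^ 2 - b i ^ 2|) ^ 2
      ≤ (∑ i ∈ s, (a i + b i) ^ 2) * ∑ i ∈ s, |a i - b i| ^ 2 := by
        simpa only [hfactor] using sum_mul_sq_le_sq_mul_sq s _ _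
    _ ≤ 2 * (∑ i ∈ s, a i ^ 2 + ∑ i ∈ s, b i ^ 2) * ∑ i ∈ s, (a i - b i) ^ 2 := by
        simp only [sq_abs, ← sum_add_distrib, mul_sum]
        gcongr with i
        exact add_sq_le

theorem mul_le_mul_half_sq_add_sq_div_sq (q : ℝ) {c s : ℝ} (hs : 0 ≤ s) (hcs : c ^ 2 ≤ s ^ 2) :
    q * c ≤ s * ((q ^ 2 + c ^ 2 / s ^ 2) / 2) := by
  rcases hs.eq_or_lt with rfl | hs
  · simp [pow_eq_zero_iff two_ne_zero |>.1 (le_antisymm (by simpa using hcs) (sq_nonneg c))]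
  · have : s * ((q ^ 2 + c ^ 2 / s ^ 2) / 2) - q * c = (s * q - c) ^ 2 / (2 * s) := by
      field_simp; ring
    nlinarith [div_nonneg (sq_nonneg (s * q - c)) (by positivity : (0 : ℝ) ≤ 2 * s)]

namespace Matrix

variable {ι m R : Type*} [Fintype m]

section DoublyStochastic

variable [Fintype ι] [DecidableEq ι] [Field R] [LinearOrder R] [IsStrictOrderedRing R]

theorem exists_mem_doublyStochastic_ge {E : Matrix ι ι R} (hE : ∀ i j, 0 ≤ E i j)
    (hrow : ∀ i, ∑ j, E i j ≤ 1) (hcol : ∀ j, ∑ i, E i j ≤ 1) :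
    ∃ D ∈ doublyStochastic R ι, ∀ i j, E i j ≤ D i j := by
  set r : ι → R := fun i ↦ 1 - ∑ j, E i j
  set c : ι → R := fun j ↦ 1 - ∑ i, E i j
  have hr : ∀ i, 0 ≤ r i := fun i ↦ sub_nonneg.2 (hrow i)
  have hc : ∀ j, 0 ≤ c j := fun j ↦ sub_nonneg.2 (hcol j)
  set t := ∑ i, r i
  have ht : ∑ j, c j = t := by
    simp only [c, r, t, sum_sub_distrib]
    rw [sum_comm]
  -- the deficits are spread proportionally; if `t = 0` there is nothing to spread and `x / 0 = 0`
  have hcancel : ∀ {x : R}, 0 ≤ x → x ≤ t → x * t / t = x := fun {x} hx hxt ↦ by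
    rcases eq_or_ne t 0 with h | h
    · simp [le_antisymm (h ▸ hxt) hx]
    · exact mul_div_cancel_right₀ x h
  have hspread : ∀ i j, 0 ≤ r i * c j / t := fun i j ↦
    div_nonneg (mul_nonneg (hr i) (hc j)) (sum_nonneg fun i _ ↦ hr i)
  refine ⟨E + of fun i j ↦ r i * c j / t, ?_, fun i j ↦ ?_⟩
  · rw [mem_doublyStochastic_iff_sum]
    refine ⟨fun i j ↦ ?_, fun i ↦ ?_, fun j ↦ ?_⟩
    · simpa using add_nonneg (hE i j) (hspread i j)
    · simp only [add_apply, of_apply, sum_add_distrib, ← sum_div, ← mul_sum, ht]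
      rw [hcancel (hr i) (single_le_sum (fun i _ ↦ hr i) (mem_univ i))]
      ring
    · simp only [add_apply, of_apply, sum_add_distrib, ← sum_div, ← sum_mul]
      rw [mul_comm, hcancel (hc j) (ht ▸ single_le_sum (fun j _ ↦ hc j) (mem_univ j))]
      ring
  · simpa using hspread i j

theorem exists_perm_sum_mul_mul_le_of_mem_doublyStochastic (x y : ι → R) {D : Matrix ι ι R}
    (hD : D ∈ doublyStochastic R ι) :
    ∃ σ : Equiv.Perm ι, ∑ i, ∑ j, x i * y j * D i j ≤ ∑ i, x i * y (σ i) := by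
  set f : Matrix ι ι R → R := fun M ↦ ∑ i, ∑ j, x i * y j * M i j
  have hf : ConvexOn R Set.univ f := by
    refine ⟨convex_univ, fun M _ N _ a b _ _ _ ↦ le_of_eq ?_⟩
    simp only [f, add_apply, smul_apply, smul_eq_mul, mul_add, sum_add_distrib, mul_sum]
    congr 1 <;> refine sum_congr rfl fun i _ ↦ sum_congr rfl fun j _ ↦ by ring
  rw [← SetLike.mem_coe, doublyStochastic_eq_convexHull_permMatrix] at hD
  obtain ⟨_, ⟨σ, rfl⟩, hσ⟩ := hf.exists_ge_of_mem_convexHull (Set.subset_univ _) hD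
  refine ⟨σ, hσ.trans_eq ?_⟩
  simp [f, PEquiv.toMatrix_apply, Equiv.toPEquiv_apply]

theorem exists_perm_sum_mul_mul_le_of_sum_le_one {x y : ι → R} (hx : ∀ i, 0 ≤ x i)
    (hy : ∀ j, 0 ≤ y j) {E : Matrix ι ι R} (hE : ∀ i j, 0 ≤ E i j)
    (hrow : ∀ i, ∑ j, E i j ≤ 1) (hcol : ∀ j, ∑ i, E i j ≤ 1) :
    ∃ σ : Equiv.Perm ι, ∑ i, ∑ j, x i * y j * E i j ≤ ∑ i, x i * y (σ i) := by
  obtain ⟨D, hD, hED⟩ := exists_mem_doublyStochastic_ge hE hrow hcol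
  obtain ⟨σ, hσ⟩ := exists_perm_sum_mul_mul_le_of_mem_doublyStochastic x y hD
  exact ⟨σ, le_trans (sum_le_sum fun i _ ↦ sum_le_sum fun j _ ↦
    mul_le_mul_of_nonneg_left (hED i j) (mul_nonneg (hx i) (hy j))) hσ⟩

end DoublyStochastic

section OrthogonalRows

-- terms with `v i = 0` vanish, as `x / 0 = 0`
theorem sum_sq_dotProduct_div_le [Fintype ι] [Field R] [LinearOrder R] [IsStrictOrderedRing R]
    (v : ι → m → R) (hv : Pairwise fun i j ↦ v i ⬝ᵥ v j = 0) (u : m → R) :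
    ∑ i, (u ⬝ᵥ v i) ^ 2 / (v i ⬝ᵥ v i) ≤ u ⬝ᵥ u := by
  set k : ι → R := fun i ↦ (u ⬝ᵥ v i) / (v i ⬝ᵥ v i)
  set w : m → R := ∑ i, k i • v i
  have huw : u ⬝ᵥ w = ∑ i, (u ⬝ᵥ v i) ^ 2 / (v i ⬝ᵥ v i) := by
    simp only [w, k, dotProduct_sum, dotProduct_smul, smul_eq_mul]
    exact sum_congr rfl fun i _ ↦ by ring
  have hww : w ⬝ᵥ w = ∑ i, (u ⬝ᵥ v i) ^ 2 / (v i ⬝ᵥ v i) := by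
    simp only [w, dotProduct_sum, sum_dotProduct, dotProduct_smul, smul_dotProduct, smul_eq_mul]
    refine sum_congr rfl fun i _ ↦ ?_
    rw [sum_eq_single i (fun j _ hji ↦ by simp [hv hji]) (by simp)]
    rcases eq_or_ne (v i ⬝ᵥ v i) 0 with h | h
    · simp [h]
    · simp only [k]; field_simp
  have : 0 ≤ (u - w) ⬝ᵥ (u - w) := sum_nonneg fun a _ ↦ mul_self_nonneg _
  rw [sub_dotProduct, dotProduct_sub, dotProduct_sub, dotProduct_comm w u, huw, hww] at this
  linarith

theorem dotProduct_sq_le_mul [CommRing R] [LinearOrder R] [IsStrictOrderedRing R] (u v : m → R) :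
    (u ⬝ᵥ v) ^ 2 ≤ (u ⬝ᵥ u) * (v ⬝ᵥ v) := by
  simpa only [dotProduct, sq] using sum_mul_sq_le_sq_mul_sq univ u v

theorem dotProduct_eq_of_mul_transpose_eq_diagonal [DecidableEq ι] [CommSemiring R]
    {X : Matrix ι m R} {d : ι → R} (hX : X * Xᵀ = diagonal d) (i j : ι) :
    X i ⬝ᵥ X j = diagonal d i j := by
  rw [← hX]; rfl

theorem nonneg_of_mul_transpose_eq_diagonal [DecidableEq ι] [CommRing R] [LinearOrder R]
    [IsStrictOrderedRing R] {X : Matrix ι m R} {d : ι → R} (hX : X * Xᵀ = diagonal d) (i : ι) :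
    0 ≤ d i := by
  have := dotProduct_eq_of_mul_transpose_eq_diagonal hX i i
  rw [diagonal_apply_eq] at this
  exact this ▸ sum_nonneg fun k _ ↦ mul_self_nonneg (X i k)

theorem sum_sq_dotProduct_div_mul_le_one [Fintype ι] [DecidableEq ι] [Field R] [LinearOrder R]
    [IsStrictOrderedRing R] {X Y : Matrix ι m R} {a b : ι → R} (hX : X * Xᵀ = diagonal a)
    (hY : Y * Yᵀ = diagonal b) (i : ι) : ∑ j, (X i ⬝ᵥ Y j) ^ 2 / (a i * b j) ≤ 1 := by
  have hXX := dotProduct_eq_of_mul_transpose_eq_diagonal hX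
  have hYY := dotProduct_eq_of_mul_transpose_eq_diagonal hY
  have hbessel := sum_sq_dotProduct_div_le Y
    (fun j l hjl ↦ (hYY j l).trans (diagonal_apply_ne _ hjl)) (X i)
  simp only [hYY, hXX, diagonal_apply_eq] at hbessel
  calc ∑ j, (X i ⬝ᵥ Y j) ^ 2 / (a i * b j) = (∑ j, (X i ⬝ᵥ Y j) ^ 2 / b j) / a i := by
        rw [sum_div]; exact sum_congr rfl fun j _ ↦ by rw [div_div, mul_comm]
    _ ≤ 1 := div_le_one_of_le₀ hbessel (nonneg_of_mul_transpose_eq_diagonal hX i)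

theorem exists_perm_trace_mul_le_of_mul_transpose_eq_diagonal [Fintype ι] [DecidableEq ι]
    {X Y : Matrix ι m ℝ} {a b : ι → ℝ} (hX : X * Xᵀ = diagonal a) (hY : Y * Yᵀ = diagonal b)
    {Q : Matrix ι ι ℝ} (hQ : Q ∈ orthogonalGroup ι ℝ) :
    ∃ σ : Equiv.Perm ι, trace (Q * (X * Yᵀ)) ≤ ∑ i, √(a i) * √(b (σ i)) := by
  -- `(Xᵢ ⬝ Yⱼ)² / (aᵢ bⱼ)` is the squared cosine of the angle between the rows `Xᵢ` and `Yⱼ`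
  set E : Matrix ι ι ℝ := of fun i j ↦ (Q j i ^ 2 + (X i ⬝ᵥ Y j) ^ 2 / (a i * b j)) / 2
  have ha := nonneg_of_mul_transpose_eq_diagonal hX
  have hb := nonneg_of_mul_transpose_eq_diagonal hY
  have hQrow : ∀ j, ∑ i, Q j i ^ 2 = 1 := fun j ↦ by
    simpa [mul_apply, sq] using congrFun (congrFun ((mem_orthogonalGroup_iff _ _).1 hQ) j) j
  have hQcol : ∀ i, ∑ j, Q j i ^ 2 = 1 := fun i ↦ by
    simpa [mul_apply, sq] using congrFun (congrFun ((mem_orthogonalGroup_iff' _ _).1 hQ) i) i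
  have hE0 : ∀ i j, 0 ≤ E i j := fun i j ↦ by
    have := mul_nonneg (ha i) (hb j)
    simp only [E, of_apply]; positivity
  have hErow : ∀ i, ∑ j, E i j ≤ 1 := fun i ↦ by
    simp only [E, of_apply, ← sum_div, sum_add_distrib, hQcol]
    linarith [sum_sq_dotProduct_div_mul_le_one hX hY i]
  have hEcol : ∀ j, ∑ i, E i j ≤ 1 := fun j ↦ by
    have := sum_sq_dotProduct_div_mul_le_one hY hX j
    simp only [dotProduct_comm (Y j), mul_comm (b j)] at this
    simp only [E, of_apply, ← sum_div, sum_add_distrib, hQrow]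
    linarith
  have hE : ∀ i j, Q j i * (X i ⬝ᵥ Y j) ≤ √(a i) * √(b j) * E i j := fun i j ↦ by
    have hs : (√(a i) * √(b j)) ^ 2 = a i * b j := by
      rw [mul_pow, Real.sq_sqrt (ha i), Real.sq_sqrt (hb j)]
    have hcs : (X i ⬝ᵥ Y j) ^ 2 ≤ a i * b j := by
      simpa [dotProduct_eq_of_mul_transpose_eq_diagonal hX,
        dotProduct_eq_of_mul_transpose_eq_diagonal hY] using dotProduct_sq_le_mul (X i) (Y j)
    simpa only [E, of_apply, hs] using
      mul_le_mul_half_sq_add_sq_div_sq (Q j i) (by positivity : 0 ≤ √(a i) * √(b j)) (hs ▸ hcs)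
  obtain ⟨σ, hσ⟩ := exists_perm_sum_mul_mul_le_of_sum_le_one (fun i ↦ Real.sqrt_nonneg (a i))
    (fun j ↦ Real.sqrt_nonneg (b j)) hE0 hErow hEcol
  refine ⟨σ, le_trans ?_ hσ⟩
  calc trace (Q * (X * Yᵀ)) = ∑ i, ∑ j, Q j i * (X i ⬝ᵥ Y j) := by
        simp only [trace, diag, mul_apply]; rw [sum_comm]; rfl
    _ ≤ _ := sum_le_sum fun i _ ↦ sum_le_sum fun j _ ↦ hE i j

end OrthogonalRows

section Eigenvalues

variable [Fintype ι] [DecidableEq ι]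

theorem star_eigenvectorUnitary_mul_mul_transpose (A : Matrix ι m ℝ)
    (hA : (A * Aᵀ).IsHermitian) :
    (star (hA.eigenvectorUnitary : Matrix ι ι ℝ) * A) *
      (star (hA.eigenvectorUnitary : Matrix ι ι ℝ) * A)ᵀ = diagonal hA.eigenvalues := by
  have := hA.conjStarAlgAut_star_eigenvectorUnitary
  rw [Unitary.conjStarAlgAut_star_apply] at this
  simpa [transpose_mul, star_eq_conjTranspose, Matrix.mul_assoc] using this

theorem exists_perm_trace_mul_transpose_le (A B : Matrix ι m ℝ) (hA : (A * Aᵀ).IsHermitian)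
    (hB : (B * Bᵀ).IsHermitian) :
    ∃ σ : Equiv.Perm ι,
      trace (A * Bᵀ) ≤ ∑ i, √(hA.eigenvalues i) * √(hB.eigenvalues (σ i)) := by
  have hQ : star (hB.eigenvectorUnitary : Matrix ι ι ℝ) * hA.eigenvectorUnitary ∈
      orthogonalGroup ι ℝ := (star hB.eigenvectorUnitary * hA.eigenvectorUnitary).2
  obtain ⟨σ, hσ⟩ := exists_perm_trace_mul_le_of_mul_transpose_eq_diagonal
    (star_eigenvectorUnitary_mul_mul_transpose A hA)
    (star_eigenvectorUnitary_mul_mul_transpose B hB) hQ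
  refine ⟨σ, le_of_eq_of_le ?_ hσ⟩
  have hU := Unitary.mul_star_self_of_mem hA.eigenvectorUnitary.2
  have hV := Unitary.mul_star_self_of_mem hB.eigenvectorUnitary.2
  generalize (hA.eigenvectorUnitary : Matrix ι ι ℝ) = U,
    (hB.eigenvectorUnitary : Matrix ι ι ℝ) = V at hU hV
  have hVt : (star V)ᵀ = V := by
    rw [star_eq_conjTranspose, conjTranspose_eq_transpose_of_trivial, transpose_transpose]
  simp only [transpose_mul, hVt, Matrix.mul_assoc]
  rw [← Matrix.mul_assoc U, hU, Matrix.one_mul, trace_mul_comm (star V)]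
  simp only [Matrix.mul_assoc, hV, Matrix.mul_one]

theorem eigenvalues_mul_transpose_self_nonneg {A : Matrix ι m ℝ} (hA : (A * Aᵀ).IsHermitian)
    (i : ι) : 0 ≤ hA.eigenvalues i :=
  eigenvalues_self_mul_conjTranspose_nonneg A i

theorem exists_perm_sum_sq_sqrt_eigenvalues_sub_le (A B : Matrix ι m ℝ)
    (hA : (A * Aᵀ).IsHermitian) (hB : (B * Bᵀ).IsHermitian) :
    ∃ σ : Equiv.Perm ι, ∑ i, (√(hA.eigenvalues i) - √(hB.eigenvalues (σ i))) ^ 2 ≤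
      trace ((A - B) * (A - B)ᵀ) := by
  obtain ⟨σ, hσ⟩ := exists_perm_trace_mul_transpose_le A B hA hB
  refine ⟨σ, ?_⟩
  have htrA : trace (A * Aᵀ) = ∑ i, hA.eigenvalues i := by
    simpa using hA.trace_eq_sum_eigenvalues
  have htrB : trace (B * Bᵀ) = ∑ i, hB.eigenvalues (σ i) := by
    simpa [Equiv.sum_comp σ hB.eigenvalues] using hB.trace_eq_sum_eigenvalues
  have htrBA : trace (B * Aᵀ) = trace (A * Bᵀ) := by
    rw [← trace_transpose, transpose_mul, transpose_transpose]
  have hsq : ∀ i, (√(hA.eigenvalues i) - √(hB.eigenvalues (σ i))) ^ 2 =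
      hA.eigenvalues i + hB.eigenvalues (σ i) -
        2 * (√(hA.eigenvalues i) * √(hB.eigenvalues (σ i))) :=
    fun i ↦ by
      rw [sub_sq, Real.sq_sqrt (eigenvalues_mul_transpose_self_nonneg hA i),
        Real.sq_sqrt (eigenvalues_mul_transpose_self_nonneg hB (σ i))]
      ring
  simp only [hsq, sum_sub_distrib, sum_add_distrib, ← mul_sum, transpose_sub, Matrix.sub_mul,
    Matrix.mul_sub, trace_sub, htrBA, ← htrA, ← htrB]
  linarith

theorem exists_perm_sq_sum_abs_eigenvalues_sub_le (A B : Matrix ι m ℝ)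
    (hA : (A * Aᵀ).IsHermitian) (hB : (B * Bᵀ).IsHermitian) :
    ∃ σ : Equiv.Perm ι, (∑ i, |hA.eigenvalues i - hB.eigenvalues (σ i)|) ^ 2 ≤
      2 * trace (A * Aᵀ + B * Bᵀ) * trace ((A - B) * (A - B)ᵀ) := by
  obtain ⟨σ, hσ⟩ := exists_perm_sum_sq_sqrt_eigenvalues_sub_le A B hA hB
  refine ⟨σ, ?_⟩
  have hA0 := eigenvalues_mul_transpose_self_nonneg hA
  have hB0 := eigenvalues_mul_transpose_self_nonneg hB
  have h := sq_sum_abs_sq_sub_sq_le univ (fun i ↦ Real.sqrt_nonneg (hA.eigenvalues i))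
    (fun i ↦ Real.sqrt_nonneg (hB.eigenvalues (σ i)))
  simp only [Real.sq_sqrt (hA0 _), Real.sq_sqrt (hB0 _), Equiv.sum_comp σ hB.eigenvalues] at h
  have htr : trace (A * Aᵀ + B * Bᵀ) = ∑ i, hA.eigenvalues i + ∑ i, hB.eigenvalues i := by
    simpa using congrArg₂ (· + ·) hA.trace_eq_sum_eigenvalues hB.trace_eq_sum_eigenvalues
  rw [htr]
  exact h.trans (mul_le_mul_of_nonneg_left hσ (mul_nonneg zero_le_two
    (add_nonneg (sum_nonneg fun i _ ↦ hA0 i) (sum_nonneg fun i _ ↦ hB0 i))))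

end Eigenvalues

end Matrix

open Matrix

theorem integral_ESD {p : ℕ} {M : Matrix (Fin p) (Fin p) ℝ} (hM : M.IsHermitian) (f : ℝ → ℝ) :
    ∫ x, f x ∂ESD M = (p : ℝ)⁻¹ * ∑ i, f (hM.eigenvalues i) := by
  rw [ESD, dif_pos hM, integral_smul_measure,
    integral_finsetSum_measure fun i _ ↦ integrable_dirac (by simp)]
  simp [integral_dirac]

theorem abs_integral_ESD_sub_le {p : ℕ} {M N : Matrix (Fin p) (Fin p) ℝ} (hM : M.IsHermitian)
    (hN : N.IsHermitian) {f : ℝ → ℝ} (hf : LipschitzWith 1 f) (σ : Equiv.Perm (Fin p)) :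
    |∫ x, f x ∂ESD M - ∫ x, f x ∂ESD N| ≤
      (p : ℝ)⁻¹ * ∑ i, |hM.eigenvalues i - hN.eigenvalues (σ i)| := by
  rw [integral_ESD hM, integral_ESD hN, ← mul_sub, abs_mul, abs_inv, Nat.abs_cast,
    ← Equiv.sum_comp σ (fun i ↦ f (hN.eigenvalues i)), ← sum_sub_distrib]
  gcongr
  refine (abs_sum_le_sum_abs _ _).trans (sum_le_sum fun i _ ↦ ?_)
  simpa [Real.dist_eq] using hf.dist_le_mul (hM.eigenvalues i) (hN.eigenvalues (σ i))

theorem dBL_nonneg (μ ν : Measure ℝ) : 0 ≤ dBL μ ν :=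
  Real.sSup_nonneg <| by rintro _ ⟨f, -, -, rfl⟩; exact abs_nonneg _

theorem dBL_le {μ ν : Measure ℝ} {c : ℝ} (hc : 0 ≤ c)
    (h : ∀ f : ℝ → ℝ, LipschitzWith 1 f → |∫ x, f x ∂μ - ∫ x, f x ∂ν| ≤ c) : dBL μ ν ≤ c :=
  Real.sSup_le (by rintro _ ⟨f, -, hf, rfl⟩; exact h f hf) hc

/-- Lemma 1(b): for `p × n` real matrices `A`, `B` with `X = AAᵀ`, `Y = BBᵀ`,
`d_BL²(F^X, F^Y) ≤ (2/p²) Tr(X + Y) Tr((A - B)(A - B)ᵀ)`. -/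
theorem dBL_sq_le_trace_prod (p n : ℕ) (A B : Matrix (Fin p) (Fin n) ℝ) :
    dBL (ESD (A * A.transpose)) (ESD (B * B.transpose)) ^ 2 ≤
      (2 / (p : ℝ) ^ 2) *
        (Matrix.trace (A * A.transpose + B * B.transpose) *
          Matrix.trace ((A - B) * (A - B).transpose)) := by
  have hA : (A * Aᵀ).IsHermitian := isHermitian_mul_conjTranspose_self A
  have hB : (B * Bᵀ).IsHermitian := isHermitian_mul_conjTranspose_self B
  obtain ⟨σ, hσ⟩ := exists_perm_sq_sum_abs_eigenvalues_sub_le A B hA hB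
  have hd := dBL_le (by positivity) fun f hf ↦ abs_integral_ESD_sub_le hA hB hf σ
  calc dBL (ESD (A * Aᵀ)) (ESD (B * Bᵀ)) ^ 2
      ≤ ((p : ℝ)⁻¹ * ∑ i, |hA.eigenvalues i - hB.eigenvalues (σ i)|) ^ 2 :=
        pow_le_pow_left₀ (dBL_nonneg _ _) hd 2
    _ ≤ ((p : ℝ)⁻¹) ^ 2 * (2 * (A * Aᵀ + B * Bᵀ).trace * ((A - B) * (A - B)ᵀ).trace) := by
        rw [mul_pow]; gcongr
    _ = _ := by ring
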